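/- arXiv:2308.02625 — 2 statements merged into one kernel-verified Lean document; each statement's English description precedes it below -/
import Mathlib

section
/- Let K ∈ ℝ^{d×d} be skew-symmetric and let a smooth curve ẑ_m : ℝ → ℝ^d satisfy K ∂_t ẑ_m + L δ_x^{1/2} ẑ_m = ∇S(ẑ_m) for each m (periodic in m with period N), where δ_x^{1/2} ẑ_m := (ẑ_{m+1} − ẑ_{m−1})/(2h). Then the semi-discrete energy E_m := S(ẑ_m) − (1/2)⟨ẑ_m, L δ_x^{1/2} ẑ_m⟩ and flux F_m := (1/4)[⟨ẑ_m, L ∂_t ẑ_{m−1}⟩ + ⟨ẑ_{m−1}, L ∂_t ẑ_m⟩] satisfy the semi-discrete local energy conservation law ∂_t E_m + (F_{m+1} − F_m)/h = 0. -/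
open Matrix

/-!
Pairing the semi-discrete equation with `∂ₜ ẑ_m` removes `K` by skew-symmetry and turns
`∂ₜ S(ẑ_m)` into `⟨∂ₜ ẑ_m, L δ ẑ_m⟩`. What remains of `∂ₜ E_m` is
`(1/4h)(⟨∂ₜ ẑ_m, L(ẑ_{m+1} − ẑ_{m−1})⟩ − ⟨ẑ_m, L(∂ₜ ẑ_{m+1} − ∂ₜ ẑ_{m−1})⟩)`, and skew-symmetry
of `L` identifies this with minus the discrete divergence of the flux.
-/

namespace Matrix

variable {n R : Type*} [Fintype n]

theorem dotProduct_mulVec_of_transpose_eq_neg [CommRing R] {M : Matrix n n R} (hM : Mᵀ = -M)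
    (a b : n → R) : a ⬝ᵥ M *ᵥ b = -(b ⬝ᵥ M *ᵥ a) := by
  rw [dotProduct_mulVec, ← mulVec_transpose, hM, neg_mulVec, neg_dotProduct, dotProduct_comm]

theorem dotProduct_mulVec_self_of_transpose_eq_neg [CommRing R] [NoZeroDivisors R] [CharZero R]
    {M : Matrix n n R} (hM : Mᵀ = -M) (a : n → R) : a ⬝ᵥ M *ᵥ a = 0 :=
  CharZero.eq_neg_self_iff.1 (dotProduct_mulVec_of_transpose_eq_neg hM a a)

end Matrix

section Derivatives

variable {𝕜 n : Type*} [NontriviallyNormedField 𝕜] [Fintype n] {a b : 𝕜 → n → 𝕜}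
  {a' b' : n → 𝕜} {t : 𝕜}

theorem HasDerivAt.dotProduct (ha : HasDerivAt a a' t) (hb : HasDerivAt b b' t) :
    HasDerivAt (fun s => a s ⬝ᵥ b s) (a' ⬝ᵥ b t + a t ⬝ᵥ b') t := by
  simp only [_root_.dotProduct, ← Finset.sum_add_distrib]
  exact HasDerivAt.fun_sum fun i _ => (hasDerivAt_pi.1 ha i).mul (hasDerivAt_pi.1 hb i)

theorem HasDerivAt.mulVec (M : Matrix n n 𝕜) (hb : HasDerivAt b b' t) :
    HasDerivAt (fun s => M *ᵥ b s) (M *ᵥ b') t :=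
  hasDerivAt_pi.2 fun i => by
    have hi := (hasDerivAt_const t (M i)).dotProduct hb
    rwa [zero_dotProduct, zero_add] at hi

end Derivatives

theorem semidiscrete_energy_flux_balance {n R : Type*} [Fintype n] [Field R] [CharZero R]
    {K L : Matrix n n R} (hK : Kᵀ = -K) (hL : Lᵀ = -L) (h : R)
    (zₗ z zᵣ vₗ v vᵣ : n → R) :
    v ⬝ᵥ (K *ᵥ v + L *ᵥ ((1 / (2 * h)) • (zᵣ - zₗ)))
        - 1 / 2 * (v ⬝ᵥ L *ᵥ ((1 / (2 * h)) • (zᵣ - zₗ)) + z ⬝ᵥ L *ᵥ ((1 / (2 * h)) • (vᵣ - vₗ)))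
        + (1 / 4 * (zᵣ ⬝ᵥ L *ᵥ v + z ⬝ᵥ L *ᵥ vᵣ) - 1 / 4 * (z ⬝ᵥ L *ᵥ vₗ + zₗ ⬝ᵥ L *ᵥ v)) / h
      = 0 := by
  simp only [dotProduct_add, dotProduct_mulVec_self_of_transpose_eq_neg hK, mulVec_smul,
    mulVec_sub, dotProduct_smul, dotProduct_sub, smul_eq_mul,
    dotProduct_mulVec_of_transpose_eq_neg hL v]
  ring

theorem semidiscrete_local_energy_conservation_general {d : ℕ} (h : ℝ)
    (K L : Matrix (Fin d) (Fin d) ℝ) (hK : Kᵀ = -K) (hL : Lᵀ = -L)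
    (S : (Fin d → ℝ) → ℝ) (gradS : (Fin d → ℝ) → (Fin d → ℝ))
    (z : ℤ → ℝ → (Fin d → ℝ))
    -- time derivative of each component of each curve
    (zt : ℤ → ℝ → (Fin d → ℝ))
    (hzt : ∀ m t i, HasDerivAt (fun s => z m s i) (zt m t i) t)
    -- chain rule for the energy density `S ∘ ẑ_m`
    (hS : ∀ m t, HasDerivAt (fun s => S (z m s)) (zt m t ⬝ᵥ gradS (z m t)) t)
    -- the semi-discrete multi-symplectic equations
    (hPDE : ∀ m t,
      K.mulVec (zt m t) + L.mulVec ((1 / (2 * h)) • (z (m + 1) t - z (m - 1) t))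
        = gradS (z m t))
    (E F : ℤ → ℝ → ℝ)
    (hE : ∀ m t, E m t = S (z m t)
      - (1/2 : ℝ) * (z m t ⬝ᵥ L.mulVec ((1 / (2 * h)) • (z (m + 1) t - z (m - 1) t))))
    (hF : ∀ m t, F m t = (1/4 : ℝ) *
      (z m t ⬝ᵥ L.mulVec (zt (m - 1) t) + z (m - 1) t ⬝ᵥ L.mulVec (zt m t))) :
    ∀ m t, deriv (fun s => E m s) t + (F (m + 1) t - F m t) / h = 0 := by
  intro m t
  have hz : ∀ k, HasDerivAt (z k) (zt k t) t := fun k => hasDerivAt_pi.2 (hzt k t)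
  have hEt : HasDerivAt (fun s => E m s)
      (zt m t ⬝ᵥ gradS (z m t) - 1 / 2 *
        (zt m t ⬝ᵥ L *ᵥ ((1 / (2 * h)) • (z (m + 1) t - z (m - 1) t))
          + z m t ⬝ᵥ L *ᵥ ((1 / (2 * h)) • (zt (m + 1) t - zt (m - 1) t)))) t := by
    have hδ := (((hz (m + 1)).sub (hz (m - 1))).const_smul (1 / (2 * h))).mulVec L
    simp only [hE]
    exact (hS m t).sub (((hz m).dotProduct hδ).const_mul (1 / 2))
  rw [hEt.deriv, hF, hF, add_sub_cancel_right, ← hPDE]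
  exact semidiscrete_energy_flux_balance hK hL h (z (m - 1) t) (z m t) (z (m + 1) t)
    (zt (m - 1) t) (zt m t) (zt (m + 1) t)

/-- Semi-discrete local energy conservation law. If the smooth curves
`ẑ_m : ℝ → ℝ^d` (N-periodic in `m`) satisfy
`K ∂_t ẑ_m + L δ_x^{1/2} ẑ_m = ∇S(ẑ_m)` with `K, L` skew-symmetric, then
`E_m := S(ẑ_m) − (1/2)⟨ẑ_m, L δ_x^{1/2} ẑ_m⟩` and
`F_m := (1/4)[⟨ẑ_m, L ∂_t ẑ_{m−1}⟩ + ⟨ẑ_{m−1}, L ∂_t ẑ_m⟩]` satisfy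
`∂_t E_m + (F_{m+1} − F_m)/h = 0`. -/
theorem semidiscrete_local_energy_conservation {d : ℕ} (N : ℕ) (h : ℝ) (hh : 0 < h)
    (K L : Matrix (Fin d) (Fin d) ℝ) (hK : Kᵀ = -K) (hL : Lᵀ = -L)
    (S : (Fin d → ℝ) → ℝ) (gradS : (Fin d → ℝ) → (Fin d → ℝ))
    (z : ℤ → ℝ → (Fin d → ℝ))
    (hper : ∀ m t, z (m + N) t = z m t)
    -- time derivative of each component of each curve
    (zt : ℤ → ℝ → (Fin d → ℝ))
    (hzt : ∀ m t i, HasDerivAt (fun s => z m s i) (zt m t i) t)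
    -- chain rule for the energy density `S ∘ ẑ_m`
    (hS : ∀ m t, HasDerivAt (fun s => S (z m s)) (zt m t ⬝ᵥ gradS (z m t)) t)
    -- the semi-discrete multi-symplectic equations
    (hPDE : ∀ m t,
      K.mulVec (zt m t) + L.mulVec ((1 / (2 * h)) • (z (m + 1) t - z (m - 1) t))
        = gradS (z m t))
    (E F : ℤ → ℝ → ℝ)
    (hE : ∀ m t, E m t = S (z m t)
      - (1/2 : ℝ) * (z m t ⬝ᵥ L.mulVec ((1 / (2 * h)) • (z (m + 1) t - z (m - 1) t))))
    (hF : ∀ m t, F m t = (1/4 : ℝ) *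
      (z m t ⬝ᵥ L.mulVec (zt (m - 1) t) + z (m - 1) t ⬝ᵥ L.mulVec (zt m t))) :
    ∀ m t, deriv (fun s => E m s) t + (F (m + 1) t - F m t) / h = 0 :=
  semidiscrete_local_energy_conservation_general h K L hK hL S gradS z zt hzt hS hPDE E F hE hF
end

section
/- Consider the fully discrete linear wave scheme δ_t² u_j^n − μ_t² (δ_x^{1/2})² u_j^n = 0 on an N-periodic spatial grid, equivalently the system −δ_t v_j^n + δ_x^{1/2} μ_t w_j^n = 0, δ_t u_j^n = μ_t v_j^n, δ_x^{1/2} μ_t u_j^n = μ_t w_j^n. Then the discrete polarized global energy ℰ̄(t_n) = (Δx/6) Σ_{j=1}^N [ 2(δ_x^{1/2} u_j^n)(δ_x^{1/2} u_j^{n+1}) + (δ_x^{1/2} u_j^n)² + 2 v_j^n v_j^{n+1} + (v_j^n)² ] is conserved: ℰ̄(t_{n+1}) = ℰ̄(t_n). -/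
/-!
Writing `a n = δ_x u^n` and `v n` for the grid functions at time `n`, the scheme is equivalent to
the midpoint rule `a (n+1) - a n = D (v (n+1) + v n)`, `v (n+1) - v n = D (a (n+1) + a n)` with
the skew-adjoint operator `D = (Δt/2) δ_x`. Such a step preserves `|a|² + |v|²`: its change
`D s_v ⬝ s_a + D s_a ⬝ s_v`, with `s_a = a (n+1) + a n` and `s_v = v (n+1) + v n`, vanishes by
skew-adjointness. The recursion is linear, so it is also solved by `a n + a (n+1)`,
`v n + v (n+1)`, whose energy is therefore conserved too; the polarized energy is the difference
of these two invariants.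
-/

/-- periodic central difference operator on an `N`-periodic grid -/
noncomputable def Dx {N : ℕ} (Δx : ℝ) (a : ZMod N → ℝ) : ZMod N → ℝ :=
  fun j => (a (j + 1) - a (j - 1)) / (2 * Δx)

section MidpointRule

variable {ι R : Type*} [Fintype ι] [CommRing R] {D : (ι → R) →ₗ[R] (ι → R)}

theorem dotProduct_self_add_eq_of_midpoint_step (hD : ∀ x y, D x ⬝ᵥ y = -(x ⬝ᵥ D y))
    {x x' y y' : ι → R} (hx : x' - x = D (y' + y)) (hy : y' - y = D (x' + x)) :
    x' ⬝ᵥ x' + y' ⬝ᵥ y' = x ⬝ᵥ x + y ⬝ᵥ y := by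
  have h : (x' - x) ⬝ᵥ (x' + x) + (y' - y) ⬝ᵥ (y' + y) = 0 := by
    rw [hx, hy, hD, dotProduct_comm (y' + y), neg_add_cancel]
  simp only [sub_dotProduct, dotProduct_add] at h
  rw [dotProduct_comm x x', dotProduct_comm y y'] at h
  linear_combination h

def polarizedEnergy (a v : ℕ → ι → R) (n : ℕ) : R :=
  2 * (a n ⬝ᵥ a (n + 1)) + a n ⬝ᵥ a n + 2 * (v n ⬝ᵥ v (n + 1)) + v n ⬝ᵥ v n

theorem polarizedEnergy_succ (hD : ∀ x y, D x ⬝ᵥ y = -(x ⬝ᵥ D y)) {a v : ℕ → ι → R}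
    (ha : ∀ n, a (n + 1) - a n = D (v (n + 1) + v n))
    (hv : ∀ n, v (n + 1) - v n = D (a (n + 1) + a n)) (n : ℕ) :
    polarizedEnergy a v (n + 1) = polarizedEnergy a v n := by
  have step_sum {s t : ℕ → ι → R} (hs : ∀ n, s (n + 1) - s n = D (t (n + 1) + t n)) :
      (s (n + 1) + s (n + 2)) - (s n + s (n + 1))
        = D ((t (n + 1) + t (n + 2)) + (t n + t (n + 1))) := by
    rw [show (s (n + 1) + s (n + 2)) - (s n + s (n + 1))
        = (s (n + 2) - s (n + 1)) + (s (n + 1) - s n) by abel, hs, hs, ← map_add]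
    congr 1
    abel
  have hsum := dotProduct_self_add_eq_of_midpoint_step hD (step_sum ha) (step_sum hv)
  have hsucc := dotProduct_self_add_eq_of_midpoint_step hD (ha (n + 1)) (hv (n + 1))
  simp only [add_dotProduct, dotProduct_add] at hsum
  rw [dotProduct_comm (a (n + 2)), dotProduct_comm (v (n + 2)), dotProduct_comm (a (n + 1)) (a n),
    dotProduct_comm (v (n + 1)) (v n)] at hsum
  unfold polarizedEnergy
  linear_combination hsum - hsucc

end MidpointRule

theorem sum_mul_shift {G R : Type*} [AddGroup G] [Fintype G] [CommSemiring R] (f g : G → R)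
    (k : G) : ∑ j, f (j + k) * g j = ∑ j, f j * g (j - k) :=
  Fintype.sum_equiv (Equiv.addRight k) _ _ fun j => by simp

section CentralDifference

variable {N : ℕ} (Δx : ℝ)

theorem Dx_dotProduct [NeZero N] (a b : ZMod N → ℝ) : Dx Δx a ⬝ᵥ b = -(a ⬝ᵥ Dx Δx b) := by
  have expand (c d : ZMod N → ℝ) :
      Dx Δx c ⬝ᵥ d = (∑ j, c (j + 1) * d j - ∑ j, c (j - 1) * d j) / (2 * Δx) := by
    simp only [dotProduct, Dx, ← Finset.sum_sub_distrib, Finset.sum_div]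
    exact Finset.sum_congr rfl fun j _ => by ring
  rw [dotProduct_comm a, expand, expand, sum_mul_shift a b, sum_mul_shift b a]
  simp only [mul_comm (a _)]
  ring

theorem Dx_add (f g : ZMod N → ℝ) :
    Dx Δx (fun i => f i + g i) = fun j => Dx Δx f j + Dx Δx g j := by
  funext j
  simp only [Dx]
  ring

theorem Dx_const_mul (c : ℝ) (f : ZMod N → ℝ) :
    Dx Δx (fun i => c * f i) = fun j => c * Dx Δx f j := by
  funext j
  simp only [Dx]
  ring

theorem Dx_div_const (f : ZMod N → ℝ) (c : ℝ) :
    Dx Δx (fun i => f i / c) = fun j => Dx Δx f j / c := by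
  funext j
  simp only [Dx]
  ring

noncomputable def dxLinearMap : (ZMod N → ℝ) →ₗ[ℝ] (ZMod N → ℝ) where
  toFun := Dx Δx
  map_add' := Dx_add Δx
  map_smul' := Dx_const_mul Δx

@[simp]
theorem coe_dxLinearMap : ⇑(dxLinearMap (N := N) Δx) = Dx Δx := rfl

theorem smul_dxLinearMap_dotProduct [NeZero N] (c : ℝ) (x y : ZMod N → ℝ) :
    (c • dxLinearMap Δx) x ⬝ᵥ y = -(x ⬝ᵥ (c • dxLinearMap Δx) y) := by
  simp only [LinearMap.smul_apply, coe_dxLinearMap, smul_dotProduct, dotProduct_smul,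
    Dx_dotProduct, smul_neg]

end CentralDifference

section WaveScheme

variable {N : ℕ}

def IsWaveSchemeSolution (Δt Δx : ℝ) (u : ZMod N → ℕ → ℝ) : Prop :=
  ∀ j n, (u j (n + 2) - 2 * u j (n + 1) + u j n) / Δt ^ 2
    - Dx Δx (Dx Δx (fun i => (u i (n + 2) + 2 * u i (n + 1) + u i n) / 4)) j = 0

noncomputable def schemeVelocity (Δt Δx : ℝ) (u : ZMod N → ℕ → ℝ) : ZMod N → ℕ → ℝ :=
  fun j n => (u j (n + 1) - u j n) / Δt
    - (Δt / 2) * Dx Δx (Dx Δx (fun i => (u i (n + 1) + u i n) / 2)) j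

variable {Δt Δx : ℝ} {u : ZMod N → ℕ → ℝ}

theorem IsWaveSchemeSolution.sub_eq (hu : IsWaveSchemeSolution Δt Δx u) (hΔt : Δt ≠ 0)
    (j : ZMod N) (n : ℕ) :
    u j (n + 1) - u j n
      = Δt / 2 * (schemeVelocity Δt Δx u j (n + 1) + schemeVelocity Δt Δx u j n) := by
  have h := hu j n
  simp only [schemeVelocity, Dx_add, Dx_const_mul, Dx_div_const] at h ⊢
  field_simp at h ⊢
  linear_combination -h

theorem IsWaveSchemeSolution.Dx_sub_eq (hu : IsWaveSchemeSolution Δt Δx u) (hΔt : Δt ≠ 0)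
    (n : ℕ) :
    Dx Δx (fun i => u i (n + 1)) - Dx Δx (fun i => u i n)
      = ((Δt / 2) • dxLinearMap Δx)
          ((fun j => schemeVelocity Δt Δx u j (n + 1)) + fun j => schemeVelocity Δt Δx u j n) := by
  funext j
  simp only [Pi.sub_apply, LinearMap.smul_apply, coe_dxLinearMap, Pi.smul_apply, smul_eq_mul, Dx,
    Pi.add_apply]
  linear_combination (hu.sub_eq hΔt (j + 1) n - hu.sub_eq hΔt (j - 1) n) / (2 * Δx)

theorem IsWaveSchemeSolution.schemeVelocity_sub_eq (hu : IsWaveSchemeSolution Δt Δx u)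
    (hΔt : Δt ≠ 0) (n : ℕ) :
    (fun j => schemeVelocity Δt Δx u j (n + 1)) - (fun j => schemeVelocity Δt Δx u j n)
      = ((Δt / 2) • dxLinearMap Δx) (Dx Δx (fun i => u i (n + 1)) + Dx Δx (fun i => u i n)) := by
  funext j
  have h := hu j n
  simp only [schemeVelocity, Pi.sub_apply, LinearMap.smul_apply, map_add, coe_dxLinearMap,
    Pi.add_apply, Pi.smul_apply, smul_eq_mul, Dx_add, Dx_const_mul, Dx_div_const] at h ⊢
  field_simp at h ⊢
  linear_combination h

end WaveScheme

theorem wave_LIGEP_energy_conservation_general {N : ℕ} [NeZero N]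
    (Δt Δx : ℝ) (hΔt : 0 < Δt)
    (u v : ZMod N → ℕ → ℝ)
    (hscheme : ∀ (j : ZMod N) (n : ℕ),
      (u j (n + 2) - 2 * u j (n + 1) + u j n) / Δt ^ 2
        - Dx Δx (Dx Δx (fun i => (u i (n + 2) + 2 * u i (n + 1) + u i n) / 4)) j = 0)
    (hv : ∀ (j : ZMod N) (n : ℕ),
      v j n = (u j (n + 1) - u j n) / Δt
        - (Δt / 2) * Dx Δx (Dx Δx (fun i => (u i (n + 1) + u i n) / 2)) j)
    (E : ℕ → ℝ)
    (hE : ∀ n, E n = (Δx / 6) * ∑ j : ZMod N,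
      (2 * Dx Δx (fun i => u i n) j * Dx Δx (fun i => u i (n + 1)) j
        + (Dx Δx (fun i => u i n) j) ^ 2
        + 2 * v j n * v j (n + 1) + (v j n) ^ 2)) :
    ∀ n, E (n + 1) = E n := by
  obtain rfl : v = schemeVelocity Δt Δx u := funext fun j => funext (hv j)
  have hu : IsWaveSchemeSolution Δt Δx u := hscheme
  have hE_polarized (n : ℕ) : E n = Δx / 6 * polarizedEnergy
      (fun n => Dx Δx (fun i => u i n)) (fun n j => schemeVelocity Δt Δx u j n) n := by
    simp only [hE, polarizedEnergy, dotProduct, Finset.mul_sum, ← Finset.sum_add_distrib, sq]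
    ring_nf
  intro n
  rw [hE_polarized, hE_polarized, polarizedEnergy_succ (smul_dxLinearMap_dotProduct Δx _)
    (hu.Dx_sub_eq hΔt.ne') (hu.schemeVelocity_sub_eq hΔt.ne')]

/-- For the fully discrete linear wave scheme
`δ_t² u − μ_t² (δ_x^{1/2})² u = 0` on an `N`-periodic grid, with
`v_j^n = δ_t u_j^n − (Δt/2) μ_t (δ_x^{1/2})² u_j^n`, the discrete polarized global energy
`ℰ̄(t_n) = (Δx/6) Σ_j [2(δ_x u_j^n)(δ_x u_j^{n+1}) + (δ_x u_j^n)² + 2 v_j^n v_j^{n+1} + (v_j^n)²]`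
is conserved. -/
theorem wave_LIGEP_energy_conservation {N : ℕ} [NeZero N]
    (Δt Δx : ℝ) (hΔt : 0 < Δt) (hΔx : 0 < Δx)
    (u v : ZMod N → ℕ → ℝ)
    (hscheme : ∀ (j : ZMod N) (n : ℕ),
      (u j (n + 2) - 2 * u j (n + 1) + u j n) / Δt ^ 2
        - Dx Δx (Dx Δx (fun i => (u i (n + 2) + 2 * u i (n + 1) + u i n) / 4)) j = 0)
    (hv : ∀ (j : ZMod N) (n : ℕ),
      v j n = (u j (n + 1) - u j n) / Δt
        - (Δt / 2) * Dx Δx (Dx Δx (fun i => (u i (n + 1) + u i n) / 2)) j)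
    (E : ℕ → ℝ)
    (hE : ∀ n, E n = (Δx / 6) * ∑ j : ZMod N,
      (2 * Dx Δx (fun i => u i n) j * Dx Δx (fun i => u i (n + 1)) j
        + (Dx Δx (fun i => u i n) j) ^ 2
        + 2 * v j n * v j (n + 1) + (v j n) ^ 2)) :
    ∀ n, E (n + 1) = E n :=
  wave_LIGEP_energy_conservation_general Δt Δx hΔt u v hscheme hv E hE
end
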